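/- arXiv:2507.06686 — 3 statements merged into one kernel-verified Lean document; each statement's English description precedes it below -/
import Mathlib

section
/- Let g⁰, g¹, …, gⁿ : ℝᵐ → ℝ be C², and let w : ℝ × ℝⁿ → ℝᵐ be C¹. Define f^{Aα}(v) := ∂g^α/∂v_A and U^α(v) := Σ_A v_A ∂g^α/∂v_A(v) − g^α(v). If for each A = 1, …, m one has ∂ₜ[f^{A0}(w(t,x))] + Σⱼ ∂ⱼ[f^{Aj}(w(t,x))] = 0 pointwise, then ∂ₜ[U⁰(w(t,x))] + Σⱼ ∂ⱼ[Uʲ(w(t,x))] = 0 pointwise. -/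
open Matrix

/-- Partial derivative in the time variable `t` (the first component). -/
noncomputable def pt {n : ℕ} (g : ℝ × (Fin n → ℝ) → ℝ) (p : ℝ × (Fin n → ℝ)) : ℝ :=
  fderiv ℝ g p (1, 0)

/-- Partial derivative in the `j`-th space variable. -/
noncomputable def px {n : ℕ} (j : Fin n) (g : ℝ × (Fin n → ℝ) → ℝ)
    (p : ℝ × (Fin n → ℝ)) : ℝ :=
  fderiv ℝ g p (0, Pi.single j 1)

/-- Partial derivative `∂g/∂v_A` of a function of the unknowns. -/
noncomputable def pd {m : ℕ} (g : (Fin m → ℝ) → ℝ) (A : Fin m) (v : Fin m → ℝ) : ℝ :=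
  fderiv ℝ g v (Pi.single A 1)

/-- The Legendre-type expression `U(v) = Σ_A v_A ∂g/∂v_A - g(v)`. -/
noncomputable def Uof {m : ℕ} (g : (Fin m → ℝ) → ℝ) (v : Fin m → ℝ) : ℝ :=
  (∑ A, v A * pd g A v) - g v

lemma pd_contDiff {m : ℕ} {g : (Fin m → ℝ) → ℝ} (hg : ContDiff ℝ 2 g) (A : Fin m) :
    ContDiff ℝ 1 (pd g A) := by
  have h := hg.fderiv_right (m := 1) (by norm_num)
  exact h.clm_apply contDiff_const

lemma fderiv_eq_sum {m : ℕ} {g : (Fin m → ℝ) → ℝ} {v : Fin m → ℝ}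
    (h : Fin m → ℝ) :
    fderiv ℝ g v h = ∑ A, h A * pd g A v := by
  have hh : h = ∑ A, h A • (Pi.single A 1 : Fin m → ℝ) := by
    funext j
    simp [Finset.sum_apply, Pi.single_apply]
  conv_lhs => rw [hh]
  rw [map_sum]
  simp [pd, smul_eq_mul]

lemma key {m n : ℕ} {g : (Fin m → ℝ) → ℝ} (hg : ContDiff ℝ 2 g)
    {w : ℝ × (Fin n → ℝ) → Fin m → ℝ} (hw : ContDiff ℝ 1 w)
    (p e : ℝ × (Fin n → ℝ)) :
    fderiv ℝ (fun q => Uof g (w q)) p e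
      = ∑ A, w p A * fderiv ℝ (fun q => pd g A (w q)) p e := by
  set v := w p with hv
  have hwp : HasFDerivAt w (fderiv ℝ w p) p :=
    ((hw.differentiable one_ne_zero) p).hasFDerivAt
  have hDg : HasFDerivAt g (fderiv ℝ g v) v :=
    ((hg.differentiable (by norm_num)) v).hasFDerivAt
  have hA : ∀ A, HasFDerivAt (pd g A) (fderiv ℝ (pd g A) v) v := fun A =>
    (((pd_contDiff hg A).differentiable one_ne_zero) v).hasFDerivAt
  have hprod : ∀ A : Fin m, HasFDerivAt (fun v : Fin m → ℝ => v A * pd g A v)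
      (v A • fderiv ℝ (pd g A) v
        + pd g A v • (ContinuousLinearMap.proj A : (Fin m → ℝ) →L[ℝ] ℝ)) v := by
    intro A
    exact (hasFDerivAt_apply A v).mul (hA A)
  have hsum : HasFDerivAt (fun v : Fin m → ℝ => ∑ A, v A * pd g A v)
      (∑ A, (v A • fderiv ℝ (pd g A) v
        + pd g A v • (ContinuousLinearMap.proj A : (Fin m → ℝ) →L[ℝ] ℝ))) v :=
    HasFDerivAt.fun_sum (fun A _ => hprod A)
  have hU : HasFDerivAt (Uof g) (∑ A, v A • fderiv ℝ (pd g A) v) v := by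
    have h2 := hsum.sub hDg
    have heq : (∑ A, (v A • fderiv ℝ (pd g A) v
        + pd g A v • (ContinuousLinearMap.proj A : (Fin m → ℝ) →L[ℝ] ℝ)))
          - fderiv ℝ g v = ∑ A, v A • fderiv ℝ (pd g A) v := by
      ext h
      simp only [ContinuousLinearMap.sub_apply, ContinuousLinearMap.sum_apply,
        ContinuousLinearMap.add_apply, ContinuousLinearMap.smul_apply,
        ContinuousLinearMap.proj_apply, smul_eq_mul]
      rw [fderiv_eq_sum (g := g) (v := v) h, Finset.sum_add_distrib]
      ring_nf
      rw [Finset.sum_congr rfl (fun A _ => mul_comm (h A) (pd g A v))]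
      ring
    rw [heq] at h2
    exact h2
  have hcomp : HasFDerivAt (fun q => Uof g (w q))
      ((∑ A, v A • fderiv ℝ (pd g A) v).comp (fderiv ℝ w p)) p := hU.comp p hwp
  have hAcomp : ∀ A : Fin m,
      fderiv ℝ (fun q => pd g A (w q)) p e = fderiv ℝ (pd g A) v (fderiv ℝ w p e) := by
    intro A
    have h' : HasFDerivAt (fun q => pd g A (w q))
        ((fderiv ℝ (pd g A) v).comp (fderiv ℝ w p)) p := (hA A).comp p hwp
    rw [h'.fderiv]; rfl
  rw [hcomp.fderiv]
  simp only [ContinuousLinearMap.coe_comp', Function.comp_apply,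
    ContinuousLinearMap.sum_apply, ContinuousLinearMap.smul_apply, smul_eq_mul]
  exact Finset.sum_congr rfl (fun A _ => by rw [hAcomp A])

/-- **Entropy identity for conservation laws with flux potentials.**
If `f^{Aα} = ∂g^α/∂v_A` and `∂ₜ f^{A0}(w) + Σⱼ ∂ⱼ f^{Aj}(w) = 0`, then
`∂ₜ U⁰(w) + Σⱼ ∂ⱼ Uʲ(w) = 0` with `U^α = v_A ∂g^α/∂v_A - g^α`. -/
theorem stmt4 {n m : ℕ}
    (g0 : (Fin m → ℝ) → ℝ) (g : Fin n → (Fin m → ℝ) → ℝ)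
    (w : ℝ × (Fin n → ℝ) → Fin m → ℝ)
    (hg0 : ContDiff ℝ 2 g0) (hg : ∀ j, ContDiff ℝ 2 (g j))
    (hw : ContDiff ℝ 1 w)
    (hcl : ∀ p (A : Fin m),
      pt (fun q => pd g0 A (w q)) p + ∑ j, px j (fun q => pd (g j) A (w q)) p = 0) :
    ∀ p, pt (fun q => Uof g0 (w q)) p + ∑ j, px j (fun q => Uof (g j) (w q)) p = 0 := by
  intro p
  have h0 : pt (fun q => Uof g0 (w q)) p
      = ∑ A, w p A * pt (fun q => pd g0 A (w q)) p := key hg0 hw p (1, 0)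
  have hj : ∀ j, px j (fun q => Uof (g j) (w q)) p
      = ∑ A, w p A * px j (fun q => pd (g j) A (w q)) p := fun j =>
    key (hg j) hw p (0, Pi.single j 1)
  rw [h0, Finset.sum_congr rfl (fun j _ => hj j), Finset.sum_comm,
    ← Finset.sum_add_distrib]
  have : ∀ A : Fin m, w p A * pt (fun q => pd g0 A (w q)) p
      + ∑ j, w p A * px j (fun q => pd (g j) A (w q)) p = 0 := by
    intro A
    rw [← Finset.mul_sum, ← mul_add, hcl p A, mul_zero]
  simp [this]
end

section
/- Let Ω ⊆ ℝᵐ be open, let U : Ω → ℝ be C³, let U¹, …, Uⁿ : Ω → ℝ be C² and f^{Aj} : Ω → ℝ be C² (A = 1, …, m; j = 1, …, n), and suppose the compatibility relations Σ_A (∂U/∂u^A)(∂f^{Aj}/∂u^B) = ∂Uʲ/∂u^B hold on Ω. Set σ_{AB} := ∂²U/∂u^A ∂u^B. Then for each j, the matrix with entries Σ_C σ_{AC} ∂f^{Cj}/∂u^B is symmetric in A and B at every point of Ω. -/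
/-- Second partial derivative `∂²g/∂u^A ∂u^B`. -/
noncomputable def pd2 {m : ℕ} (g : (Fin m → ℝ) → ℝ) (A B : Fin m) (v : Fin m → ℝ) : ℝ :=
  pd (fun w => pd g A w) B v

open Filter Topology

lemma contDiffAt_pd {m : ℕ} {g : (Fin m → ℝ) → ℝ} {p : Fin m → ℝ}
    (hg : ContDiffAt ℝ 2 g p) (A : Fin m) :
    ContDiffAt ℝ 1 (fun w => pd g A w) p := by
  have h1 : ContDiffAt ℝ 1 (fderiv ℝ g) p := hg.fderiv_right (by norm_num)
  exact (ContinuousLinearMap.apply ℝ ℝ (Pi.single A 1)).contDiff.contDiffAt.comp p h1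

lemma diffAt_pd {m : ℕ} {g : (Fin m → ℝ) → ℝ} {p : Fin m → ℝ}
    (hg : ContDiffAt ℝ 2 g p) (A : Fin m) :
    DifferentiableAt ℝ (fun w => pd g A w) p :=
  (contDiffAt_pd hg A).differentiableAt (by norm_num)

lemma pd2_eq {m : ℕ} {g : (Fin m → ℝ) → ℝ} {p : Fin m → ℝ}
    (hg : ContDiffAt ℝ 2 g p) (A B : Fin m) :
    pd2 g A B p = fderiv ℝ (fderiv ℝ g) p (Pi.single B 1) (Pi.single A 1) := by
  have h1 : ContDiffAt ℝ 1 (fderiv ℝ g) p := hg.fderiv_right (by norm_num)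
  have hd : DifferentiableAt ℝ (fderiv ℝ g) p := h1.differentiableAt (by norm_num)
  have h2 := (ContinuousLinearMap.apply ℝ ℝ (Pi.single A 1)).hasFDerivAt.comp p hd.hasFDerivAt
  have h3 : fderiv ℝ (fun w => fderiv ℝ g w (Pi.single A 1)) p
      = (ContinuousLinearMap.apply ℝ ℝ (Pi.single A 1)).comp (fderiv ℝ (fderiv ℝ g) p) :=
    h2.fderiv
  simp only [pd2, pd, h3, ContinuousLinearMap.comp_apply, ContinuousLinearMap.apply_apply]

lemma pd2_symm {m : ℕ} {g : (Fin m → ℝ) → ℝ} {p : Fin m → ℝ}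
    (hg : ContDiffAt ℝ 2 g p) (A B : Fin m) :
    pd2 g A B p = pd2 g B A p := by
  rw [pd2_eq hg, pd2_eq hg]
  exact (hg.isSymmSndFDerivAt (by norm_num)) _ _

lemma pd_congr {m : ℕ} {g h : (Fin m → ℝ) → ℝ} {p : Fin m → ℝ}
    (hgh : g =ᶠ[𝓝 p] h) (A : Fin m) : pd g A p = pd h A p := by
  unfold pd; rw [hgh.fderiv_eq]

lemma pd_sum {m : ℕ} {ι : Type*} (s : Finset ι) {g : ι → (Fin m → ℝ) → ℝ}
    {p : Fin m → ℝ} (hg : ∀ i ∈ s, DifferentiableAt ℝ (g i) p) (A : Fin m) :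
    pd (fun w => ∑ i ∈ s, g i w) A p = ∑ i ∈ s, pd (g i) A p := by
  unfold pd
  rw [fderiv_fun_sum hg]
  simp [ContinuousLinearMap.sum_apply]

lemma pd_mul {m : ℕ} {a b : (Fin m → ℝ) → ℝ} {p : Fin m → ℝ}
    (ha : DifferentiableAt ℝ a p) (hb : DifferentiableAt ℝ b p) (A : Fin m) :
    pd (fun w => a w * b w) A p = pd a A p * b p + a p * pd b A p := by
  unfold pd
  rw [fderiv_fun_mul ha hb]
  simp [mul_comm]
  ring

/-- **The Hessian of an entropy is a symmetrizer.**
If the compatibility relations `Σ_A (∂U/∂u^A)(∂f^{Aj}/∂u^B) = ∂Uʲ/∂u^B` hold on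
an open set `Ω`, then with `σ_{AB} = ∂²U/∂u^A∂u^B`, the matrix
`Σ_C σ_{AC} ∂f^{Cj}/∂u^B` is symmetric in `A` and `B` on `Ω`. -/
theorem stmt7 {m n : ℕ}
    (Ω : Set (Fin m → ℝ)) (hΩ : IsOpen Ω)
    (U : (Fin m → ℝ) → ℝ) (Uj : Fin n → (Fin m → ℝ) → ℝ)
    (F : Fin m → Fin n → (Fin m → ℝ) → ℝ)
    (hU : ContDiffOn ℝ 3 U Ω) (hUj : ∀ j, ContDiffOn ℝ 2 (Uj j) Ω)
    (hF : ∀ A j, ContDiffOn ℝ 2 (F A j) Ω)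
    (hcomp : ∀ p ∈ Ω, ∀ (j : Fin n) (B : Fin m),
      ∑ A, pd U A p * pd (F A j) B p = pd (Uj j) B p) :
    ∀ p ∈ Ω, ∀ (j : Fin n) (A B : Fin m),
      ∑ C, pd2 U A C p * pd (F C j) B p = ∑ C, pd2 U B C p * pd (F C j) A p := by
  intro p hp j A B
  have hmem : Ω ∈ 𝓝 p := hΩ.mem_nhds hp
  have hU2 : ∀ q ∈ Ω, ContDiffAt ℝ 2 U q := fun q hq =>
    ((hU q hq).contDiffAt (hΩ.mem_nhds hq)).of_le (by norm_num)
  have hF2 : ∀ C q, q ∈ Ω → ContDiffAt ℝ 2 (F C j) q := fun C q hq =>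
    (hF C j q hq).contDiffAt (hΩ.mem_nhds hq)
  have hUj2 : ContDiffAt ℝ 2 (Uj j) p := (hUj j p hp).contDiffAt hmem
  -- key identity from differentiating the compatibility relation
  have key : ∀ E D : Fin m,
      ∑ C, pd2 U C E p * pd (F C j) D p + ∑ C, pd U C p * pd2 (F C j) D E p
        = pd2 (Uj j) D E p := by
    intro E D
    have heq : (fun w => ∑ C, pd U C w * pd (F C j) D w)
        =ᶠ[𝓝 p] (fun w => pd (Uj j) D w) :=
      Filter.eventuallyEq_of_mem hmem (fun q hq => hcomp q hq j D)
    have h1 : pd (fun w => ∑ C, pd U C w * pd (F C j) D w) E p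
        = pd2 (Uj j) D E p := pd_congr heq E
    rw [← h1]
    rw [pd_sum (g := fun C w => pd U C w * pd (F C j) D w) Finset.univ (fun C _ =>
      ((diffAt_pd (hU2 p hp) C).mul (diffAt_pd (hF2 C p hp) D))) E]
    rw [Finset.sum_add_distrib.symm]
    apply Finset.sum_congr rfl
    intro C _
    rw [pd_mul (diffAt_pd (hU2 p hp) C) (diffAt_pd (hF2 C p hp) D) E]
    rfl
  have kAB := key A B
  have kBA := key B A
  -- use symmetry of second derivatives
  have hFsymm : ∀ C, pd2 (F C j) B A p = pd2 (F C j) A B p := fun C =>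
    pd2_symm (hF2 C p hp) B A
  have hUjsymm : pd2 (Uj j) B A p = pd2 (Uj j) A B p := pd2_symm hUj2 B A
  have e1 : ∑ C, pd2 U C A p * pd (F C j) B p = ∑ C, pd2 U C B p * pd (F C j) A p := by
    have : ∑ C, pd U C p * pd2 (F C j) B A p = ∑ C, pd U C p * pd2 (F C j) A B p :=
      Finset.sum_congr rfl fun C _ => by rw [hFsymm C]
    linarith [kAB, kBA, this, hUjsymm]
  calc ∑ C, pd2 U A C p * pd (F C j) B p
      = ∑ C, pd2 U C A p * pd (F C j) B p :=
        Finset.sum_congr rfl fun C _ => by rw [pd2_symm (hU2 p hp) A C]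
    _ = ∑ C, pd2 U C B p * pd (F C j) A p := e1
    _ = ∑ C, pd2 U B C p * pd (F C j) A p :=
        Finset.sum_congr rfl fun C _ => by rw [pd2_symm (hU2 p hp) C B]
end

section
/- Let M > 0. For every real λ with 0 < λ < 1/(2M(1+M)) and every real y with |y| ≤ M, the symmetric 2 × 2 matrix [[1/2 + λy, λy], [λy, λ]] is positive definite. -/
/-- **Positivity matrix for Tricomi's equation.**
For `0 < λ < 1/(2M(1+M))` and `|y| ≤ M`, the symmetric matrix
`[[1/2 + λy, λy], [λy, λ]]` is positive definite. -/
theorem stmt14 (M : ℝ) (hM : 0 < M) :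
    ∀ lam : ℝ, 0 < lam → lam < 1 / (2 * M * (1 + M)) →
      ∀ y : ℝ, |y| ≤ M →
        Matrix.PosDef !![1/2 + lam * y, lam * y; lam * y, lam] := by
  intro lam hl hl2 y hy
  obtain ⟨hy1, hy2⟩ := abs_le.mp hy
  have hden : 0 < 2 * M * (1 + M) := by positivity
  have hlam' : lam * (2 * M * (1 + M)) < 1 := by
    rw [lt_div_iff₀ hden] at hl2; linarith
  have hMM : 0 < lam * (M * M) := by positivity
  have hya : lam * (-M) ≤ lam * y := mul_le_mul_of_nonneg_left hy1 hl.le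
  have hyy : y * y ≤ M * M := by
    nlinarith [mul_nonneg (by linarith : (0:ℝ) ≤ M - y) (by linarith : (0:ℝ) ≤ y + M)]
  have hyyl : lam * (y * y) ≤ lam * (M * M) := mul_le_mul_of_nonneg_left hyy hl.le
  have ha : 0 < 1/2 + lam * y := by nlinarith
  have hkey : 0 < 1 - 2 * lam * M - 2 * lam * (M * M) := by nlinarith
  have hdet : 0 < (1/2 + lam * y) * lam - (lam * y) * (lam * y) := by
    nlinarith [mul_pos hl hkey, mul_le_mul_of_nonneg_left hyyl hl.le,
      mul_le_mul_of_nonneg_left hya hl.le]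
  refine Matrix.PosDef.of_dotProduct_mulVec_pos ?_ ?_
  · ext i j
    fin_cases i <;> fin_cases j <;> simp [Matrix.conjTranspose, Matrix.transpose, Matrix.vecHead, Matrix.vecTail]
  · intro x hx
    simp [dotProduct, Matrix.mulVec, Fin.sum_univ_two]
    by_cases h1 : x 1 = 0
    · have h0 : x 0 ≠ 0 := by
        intro h0
        exact hx (funext fun i => by fin_cases i <;> simp [h0, h1])
      simp only [h1]
      nlinarith [mul_pos ha (mul_self_pos.mpr h0)]
    · nlinarith [sq_nonneg ((1/2 + lam*y) * x 0 + lam * y * x 1),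
        mul_pos hdet (mul_self_pos.mpr h1)]
end
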